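/- Let A be a unital C*-algebra, q ∈ (-1,1), u, v > 0 real numbers, and a, c ∈ A satisfying: (i) (star a)·a = u²·1 + q·(a·(star a)); (ii) (star a)·c = q·(c·(star a)); (iii) ‖a^p‖ ≤ C_q·(1-q)^{-p/2}·u^p and ‖c^p‖ ≤ C_q·(1-q)^{-p/2}·v^p for all integers p ≥ 1. Then for all integers n ≥ 1, 0 ≤ m ≤ n and ℓ ≥ 1 there exists X ∈ A such that (star a)^m · a^n · c^ℓ = ([n]_q!/[n-m]_q!)·u^{2m}·(a^{n-m}·c^ℓ) + q^ℓ·X and ‖X‖ ≤ (C_q^6/(1-|q|))·(1-q)^{-(m+n+ℓ)/2}·u^{m+n}·v^ℓ. -/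

import Mathlib

/-- The `q`-number `[n]_q = ∑_{j=0}^{n-1} q^j`. -/
def qNum (q : ℝ) (n : ℕ) : ℝ := ∑ j ∈ Finset.range n, q ^ j

/-- The `q`-factorial `[n]_q! = ∏_{j=1}^n [j]_q`. -/
def qFact (q : ℝ) (n : ℕ) : ℝ := ∏ j ∈ Finset.range n, qNum q (j + 1)

/-- The constant `C_q = ∏_{j=1}^∞ (1-|q|^j)^{-1}`. -/
noncomputable def Cq (q : ℝ) : ℝ := ∏' j : ℕ, (1 - |q| ^ (j + 1))⁻¹

/-!
Normal-ordering `(a⋆)^m a^n` with `a⋆ a = u² + q a a⋆` gives `[n]_q!/[n-m]_q! · u^{2m} a^{n-m}`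
plus terms `(a⋆)^{m-1-k} a^{n-k} a⋆` weighted by `[n]_q ⋯ [n-k+1]_q u^{2k} q^{n-k}`; moving the
trailing `a⋆` past `c^ℓ` produces the factor `q^ℓ`. With `s = (1-q)^{-1/2}` the norm hypotheses
read `‖a^p‖ ≤ C_q (s u)^p`, and since `[j]_q ≤ (1 + |q|^j)/(1-q)` and `∏ (1 + |q|^j) ≤ C_q`, the
weight of the `k`-th term is at most `C_q (s u)^{2k} |q|^{n-k}`. Each term is thus bounded by
`C_q^5 (s u)^{m+n} (s v)^ℓ |q|^{n-k}`, and summing the geometric series in `k` costs `1/(1-|q|)`.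
-/

open Finset

section QCalculus

variable {q : ℝ}

lemma one_add_le_inv_one_sub {x : ℝ} (hx₀ : 0 ≤ x) (hx₁ : x < 1) : 1 + x ≤ (1 - x)⁻¹ := by
  rw [← one_div, le_div_iff₀ (by linarith)]
  nlinarith

lemma hasProd_Cq (hq : |q| < 1) : HasProd (fun j : ℕ => (1 - |q| ^ (j + 1))⁻¹) (Cq q) := by
  have hlog : Summable fun j : ℕ => Real.log ((1 - |q| ^ (j + 1))⁻¹) := by
    have hgeom : Summable fun j : ℕ => -|q| ^ (j + 1) :=
      ((summable_nat_add_iff 1).2 (summable_geometric_of_lt_one (abs_nonneg q) hq)).neg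
    simpa [Real.log_inv, sub_eq_add_neg] using (Real.summable_log_one_add_of_summable hgeom).neg
  refine (Real.multipliable_of_summable_log (fun j => ?_) hlog).hasProd
  exact inv_pos.2 (sub_pos.2 (pow_lt_one₀ (abs_nonneg q) hq j.succ_ne_zero))

lemma prod_range_one_add_pow_le_Cq (hq : |q| < 1) (k : ℕ) :
    ∏ j ∈ range k, (1 + |q| ^ (j + 1)) ≤ Cq q := by
  have hfactor (j : ℕ) : 1 + |q| ^ (j + 1) ≤ (1 - |q| ^ (j + 1))⁻¹ :=
    one_add_le_inv_one_sub (by positivity) (pow_lt_one₀ (abs_nonneg q) hq j.succ_ne_zero)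
  have hmono : Monotone fun k => ∏ j ∈ range k, (1 - |q| ^ (j + 1))⁻¹ := by
    refine monotone_nat_of_le_succ fun k => ?_
    rw [prod_range_succ]
    have hone (j : ℕ) : 1 ≤ (1 - |q| ^ (j + 1))⁻¹ := by
      linarith [hfactor j, pow_nonneg (abs_nonneg q) (j + 1)]
    exact le_mul_of_one_le_right (prod_nonneg fun j _ => zero_le_one.trans (hone j)) (hone k)
  calc ∏ j ∈ range k, (1 + |q| ^ (j + 1))
      ≤ ∏ j ∈ range k, (1 - |q| ^ (j + 1))⁻¹ :=
        prod_le_prod (fun j _ => by positivity) fun j _ => hfactor j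
    _ ≤ Cq q := hmono.ge_of_tendsto (hasProd_Cq hq).tendsto_prod_nat k

lemma one_le_Cq (hq : |q| < 1) : 1 ≤ Cq q := by
  simpa using prod_range_one_add_pow_le_Cq hq 0

lemma qNum_pos (hq : -1 < q) {n : ℕ} (hn : n ≠ 0) : 0 < qNum q n :=
  geom_sum_pos' (by linarith) hn

lemma qNum_le (hq : q < 1) (n : ℕ) : qNum q n ≤ (1 + |q| ^ n) * (1 - q)⁻¹ := by
  rw [← div_eq_mul_inv, le_div_iff₀ (sub_pos.2 hq), qNum, geom_sum_mul_neg]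
  linarith [neg_abs_le (q ^ n), abs_pow q n]

def qDescFactorial (q : ℝ) (n k : ℕ) : ℝ := ∏ j ∈ range k, qNum q (n - j)

lemma qDescFactorial_succ (n k : ℕ) :
    qDescFactorial q n (k + 1) = qDescFactorial q n k * qNum q (n - k) :=
  prod_range_succ _ k

lemma qFact_eq_mul_qDescFactorial {n k : ℕ} (h : k ≤ n) :
    qFact q n = qFact q (n - k) * qDescFactorial q n k := by
  obtain ⟨d, rfl⟩ := Nat.exists_eq_add_of_le' h
  rw [qFact, qFact, qDescFactorial, Nat.add_sub_cancel, prod_range_add,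
    ← prod_range_reflect (fun j => qNum q (d + k - j))]
  congr 1
  refine prod_congr rfl fun j hj => ?_
  rw [show d + k - (k - 1 - j) = d + j + 1 by have := mem_range.1 hj; omega]

lemma qDescFactorial_pos (hq : -1 < q) {n k : ℕ} (h : k ≤ n) : 0 < qDescFactorial q n k :=
  prod_pos fun j hj => qNum_pos hq (by have := mem_range.1 hj; omega)

lemma qFact_div_qFact_eq_qDescFactorial (hq : -1 < q) {n k : ℕ} (h : k ≤ n) :
    qFact q n / qFact q (n - k) = qDescFactorial q n k := by
  rw [qFact_eq_mul_qDescFactorial h, mul_div_cancel_left₀]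
  exact (prod_pos fun j _ => qNum_pos hq j.succ_ne_zero).ne'

lemma qDescFactorial_le (hq : q ∈ Set.Ioo (-1 : ℝ) 1) {n k : ℕ} (h : k ≤ n) :
    qDescFactorial q n k ≤ Cq q * (1 - q)⁻¹ ^ k := by
  have habs : |q| < 1 := abs_lt.2 hq
  calc qDescFactorial q n k ≤ ∏ j ∈ range k, (1 + |q| ^ (n - j)) * (1 - q)⁻¹ :=
        prod_le_prod (fun j hj => (qNum_pos hq.1 (by have := mem_range.1 hj; omega)).le)
          fun j _ => qNum_le hq.2 _
    _ = (∏ j ∈ range k, (1 + |q| ^ (n - j))) * (1 - q)⁻¹ ^ k := by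
        rw [prod_mul_distrib, prod_const, card_range]
    _ ≤ (∏ j ∈ range k, (1 + |q| ^ (k - 1 - j + 1))) * (1 - q)⁻¹ ^ k := by
        refine mul_le_mul_of_nonneg_right (prod_le_prod (fun j _ => by positivity) fun j hj => ?_)
          (pow_nonneg (inv_nonneg.2 (sub_pos.2 hq.2).le) k)
        have := mem_range.1 hj
        exact add_le_add_right (pow_le_pow_of_le_one (abs_nonneg q) habs.le (by omega)) 1
    _ ≤ Cq q * (1 - q)⁻¹ ^ k := by
        rw [prod_range_reflect (fun j => 1 + |q| ^ (j + 1))]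
        exact mul_le_mul_of_nonneg_right (prod_range_one_add_pow_le_Cq habs k)
          (pow_nonneg (inv_nonneg.2 (sub_pos.2 hq.2).le) k)

end QCalculus

section QCommutation

variable {R : Type*} [Ring R] [Algebra ℝ R] {q r : ℝ} {a b c : R}

lemma mul_pow_succ_of_qcomm (h : b * a = r • 1 + q • (a * b)) (k : ℕ) :
    b * a ^ (k + 1) = (qNum q (k + 1) * r) • a ^ k + q ^ (k + 1) • (a ^ (k + 1) * b) := by
  induction k with
  | zero => simpa [qNum] using h
  | succ k ih =>
    calc b * a ^ (k + 2) = (b * a) * a ^ (k + 1) := by rw [pow_succ' a (k + 1), mul_assoc]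
      _ = r • a ^ (k + 1) + q • (a * (b * a ^ (k + 1))) := by
        rw [h, add_mul, smul_mul_assoc, smul_mul_assoc, one_mul, mul_assoc]
      _ = (qNum q (k + 2) * r) • a ^ (k + 1) + q ^ (k + 2) • (a ^ (k + 2) * b) := by
        rw [ih, mul_add, mul_smul_comm, mul_smul_comm, ← pow_succ', ← mul_assoc, ← pow_succ',
          show qNum q (k + 2) = q * qNum q (k + 1) + 1 from geom_sum_succ]
        match_scalars <;> ring

lemma mul_pow_of_qcomm (h : b * c = q • (c * b)) (l : ℕ) : b * c ^ l = q ^ l • (c ^ l * b) := by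
  induction l with
  | zero => simp
  | succ l ih =>
    rw [pow_succ', ← mul_assoc, h, smul_mul_assoc, mul_assoc, ih, mul_smul_comm, smul_smul,
      ← mul_assoc, ← pow_succ', ← pow_succ']

lemma pow_mul_pow_of_qcomm (h : b * a = r • 1 + q • (a * b)) {m n : ℕ} (hmn : m ≤ n) :
    b ^ m * a ^ n = (qDescFactorial q n m * r ^ m) • a ^ (n - m)
      + ∑ k ∈ range m, (qDescFactorial q n k * r ^ k * q ^ (n - k)) •
          (b ^ (m - 1 - k) * (a ^ (n - k) * b)) := by
  induction m with
  | zero => simp [qDescFactorial]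
  | succ m ih =>
    have hstep : b * a ^ (n - m) = (qNum q (n - m) * r) • a ^ (n - (m + 1))
        + q ^ (n - m) • (a ^ (n - m) * b) := by
      have := mul_pow_succ_of_qcomm h (n - (m + 1))
      rwa [show n - (m + 1) + 1 = n - m by omega] at this
    have hshift : ∀ k ∈ range m, b * ((qDescFactorial q n k * r ^ k * q ^ (n - k)) •
        (b ^ (m - 1 - k) * (a ^ (n - k) * b))) = (qDescFactorial q n k * r ^ k * q ^ (n - k)) •
        (b ^ (m + 1 - 1 - k) * (a ^ (n - k) * b)) := fun k hk => by
      rw [mul_smul_comm, ← mul_assoc, ← pow_succ',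
        show m - 1 - k + 1 = m + 1 - 1 - k by have := mem_range.1 hk; omega]
    rw [pow_succ', mul_assoc, ih (by omega), mul_add, mul_smul_comm, hstep, mul_sum,
      sum_congr rfl hshift, sum_range_succ, Nat.add_sub_cancel, Nat.sub_self, pow_zero, one_mul,
      qDescFactorial_succ]
    module

lemma pow_mul_pow_mul_pow_of_qcomm (h₁ : b * a = r • 1 + q • (a * b))
    (h₂ : b * c = q • (c * b)) {m n : ℕ} (hmn : m ≤ n) (l : ℕ) :
    b ^ m * a ^ n * c ^ l = (qDescFactorial q n m * r ^ m) • (a ^ (n - m) * c ^ l)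
      + q ^ l • ∑ k ∈ range m, (qDescFactorial q n k * r ^ k * q ^ (n - k)) •
          (b ^ (m - 1 - k) * (a ^ (n - k) * (c ^ l * b))) := by
  rw [pow_mul_pow_of_qcomm h₁ hmn, add_mul, smul_mul_assoc, sum_mul, smul_sum]
  congr 1
  refine sum_congr rfl fun k _ => ?_
  rw [smul_mul_assoc, mul_assoc (b ^ _), mul_assoc (a ^ _), mul_pow_of_qcomm h₂, mul_smul_comm,
    mul_smul_comm, smul_comm]

end QCommutation

section Estimates

variable {A : Type*} [NormedRing A] {C α : ℝ}

lemma norm_pow_mul_le {x : A} (hC : 1 ≤ C) (hx : ∀ p : ℕ, 1 ≤ p → ‖x ^ p‖ ≤ C * α ^ p)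
    (p : ℕ) (y : A) : ‖x ^ p * y‖ ≤ C * α ^ p * ‖y‖ := by
  rcases Nat.eq_zero_or_pos p with rfl | hp
  · simpa using le_mul_of_one_le_left (norm_nonneg y) hC
  · exact norm_mul_le_of_le (hx p hp) le_rfl

lemma sum_range_pow_sub_le {x : ℝ} (hx₀ : 0 ≤ x) (hx₁ : x < 1) {m n : ℕ} (hmn : m ≤ n) :
    ∑ k ∈ range m, x ^ (n - k) ≤ 1 / (1 - x) :=
  calc ∑ k ∈ range m, x ^ (n - k) ≤ ∑ k ∈ range m, x ^ (m - 1 - k) :=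
        sum_le_sum fun k hk => pow_le_pow_of_le_one hx₀ hx₁.le (by have := mem_range.1 hk; omega)
    _ = ∑ k ∈ Ico 0 m, x ^ k := by rw [sum_range_reflect (x ^ ·) m, range_eq_Ico]
    _ ≤ 1 / (1 - x) := geom_sum_Ico_le_of_lt_one hx₀ hx₁

lemma norm_sum_smul_pow_mul_le [NormedAlgebra ℝ A] {q β : ℝ} {a b c : A} (hq : |q| < 1)
    (hC : 1 ≤ C) (hα : 0 ≤ α) (hβ : 0 ≤ β)
    (ha : ∀ p : ℕ, 1 ≤ p → ‖a ^ p‖ ≤ C * α ^ p) (hb : ∀ p : ℕ, 1 ≤ p → ‖b ^ p‖ ≤ C * α ^ p)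
    {l : ℕ} (hc : ‖c ^ l‖ ≤ C * β ^ l) {m n : ℕ} (hmn : m ≤ n) (γ : ℕ → ℝ)
    (hγ : ∀ k < m, |γ k| ≤ C * α ^ (2 * k)) :
    ‖∑ k ∈ range m, (γ k * q ^ (n - k)) • (b ^ (m - 1 - k) * (a ^ (n - k) * (c ^ l * b)))‖
      ≤ C ^ 5 * α ^ (m + n) * β ^ l / (1 - |q|) := by
  have hterm : ∀ k ∈ range m,
      ‖(γ k * q ^ (n - k)) • (b ^ (m - 1 - k) * (a ^ (n - k) * (c ^ l * b)))‖
        ≤ C ^ 5 * α ^ (m + n) * β ^ l * |q| ^ (n - k) := fun k hk => by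
    have hk := mem_range.1 hk
    have hcb : ‖c ^ l * b‖ ≤ C * β ^ l * (C * α) :=
      norm_mul_le_of_le hc (by simpa using hb 1 le_rfl)
    calc ‖(γ k * q ^ (n - k)) • (b ^ (m - 1 - k) * (a ^ (n - k) * (c ^ l * b)))‖
        = |γ k| * |q| ^ (n - k) * ‖b ^ (m - 1 - k) * (a ^ (n - k) * (c ^ l * b))‖ := by
          rw [norm_smul, Real.norm_eq_abs, abs_mul, abs_pow]
      _ ≤ C * α ^ (2 * k) * |q| ^ (n - k)
            * (C * α ^ (m - 1 - k) * (C * α ^ (n - k) * (C * β ^ l * (C * α)))) := by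
          gcongr
          · exact hγ k hk
          · refine (norm_pow_mul_le hC hb _ _).trans (mul_le_mul_of_nonneg_left ?_ (by positivity))
            exact (norm_pow_mul_le hC ha _ _).trans (mul_le_mul_of_nonneg_left hcb (by positivity))
      _ = C ^ 5 * α ^ (m + n) * β ^ l * |q| ^ (n - k) := by
          rw [show m + n = 2 * k + (m - 1 - k) + (n - k) + 1 by omega]
          ring
  calc _ ≤ ∑ k ∈ range m, C ^ 5 * α ^ (m + n) * β ^ l * |q| ^ (n - k) :=
        (norm_sum_le _ _).trans (sum_le_sum hterm)
    _ ≤ C ^ 5 * α ^ (m + n) * β ^ l * (1 / (1 - |q|)) := by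
        rw [← mul_sum]
        exact mul_le_mul_of_nonneg_left (sum_range_pow_sub_le (abs_nonneg q) hq hmn) (by positivity)
    _ = C ^ 5 * α ^ (m + n) * β ^ l / (1 - |q|) := mul_one_div _ _

end Estimates

theorem stmt1_general (A : Type*) [NormedRing A] [StarRing A] [CStarRing A]
    [NormedAlgebra ℝ A]
    (q : ℝ) (hq : q ∈ Set.Ioo (-1 : ℝ) 1) (u v : ℝ) (hu : 0 < u) (hv : 0 < v)
    (a c : A)
    (h1 : star a * a = (u ^ 2) • (1 : A) + q • (a * star a))
    (h2 : star a * c = q • (c * star a))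
    (ha : ∀ p : ℕ, 1 ≤ p → ‖a ^ p‖ ≤ Cq q * (1 - q) ^ (-(p : ℝ) / 2) * u ^ p)
    (hc : ∀ p : ℕ, 1 ≤ p → ‖c ^ p‖ ≤ Cq q * (1 - q) ^ (-(p : ℝ) / 2) * v ^ p) :
    ∀ n m ℓ : ℕ, 1 ≤ n → m ≤ n → 1 ≤ ℓ →
      ∃ X : A,
        (star a) ^ m * a ^ n * c ^ ℓ
          = (qFact q n / qFact q (n - m) * u ^ (2 * m)) • (a ^ (n - m) * c ^ ℓ)
            + (q ^ ℓ) • X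
        ∧ ‖X‖ ≤ Cq q ^ 6 / (1 - |q|) * (1 - q) ^ (-((m : ℝ) + n + ℓ) / 2)
            * u ^ (m + n) * v ^ ℓ := by
  intro n m ℓ _ hmn hℓ
  have habs : |q| < 1 := abs_lt.2 hq
  have hq₁ : 0 < 1 - q := sub_pos.2 hq.2
  set s : ℝ := (1 - q) ^ (-(1 : ℝ) / 2)
  have hscale (p : ℕ) : (1 - q) ^ (-(p : ℝ) / 2) = s ^ p := by
    rw [← Real.rpow_natCast, ← Real.rpow_mul hq₁.le]
    ring_nf
  have hs_sq : s ^ 2 = (1 - q)⁻¹ := by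
    rw [← hscale 2, ← Real.rpow_neg_one]
    norm_num
  have hC := one_le_Cq habs
  have hbound {x : A} {w : ℝ}
      (h : ∀ p : ℕ, 1 ≤ p → ‖x ^ p‖ ≤ Cq q * (1 - q) ^ (-(p : ℝ) / 2) * w ^ p)
      (p : ℕ) (hp : 1 ≤ p) : ‖x ^ p‖ ≤ Cq q * (s * w) ^ p := by
    rw [mul_pow, ← mul_assoc, ← hscale]
    exact h p hp
  have hcoeff (k : ℕ) (hk : k < m) :
      |qDescFactorial q n k * (u ^ 2) ^ k| ≤ Cq q * (s * u) ^ (2 * k) := by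
    rw [abs_of_pos (by have := qDescFactorial_pos hq.1 (hk.le.trans hmn); positivity), pow_mul,
      mul_pow, hs_sq, mul_pow, ← mul_assoc]
    exact mul_le_mul_of_nonneg_right (qDescFactorial_le hq (hk.le.trans hmn)) (by positivity)
  refine ⟨_, (pow_mul_pow_mul_pow_of_qcomm h1 h2 hmn ℓ).trans ?_,
    (norm_sum_smul_pow_mul_le habs hC (by positivity) (by positivity) (hbound ha)
      (fun p hp => by rw [← star_pow, norm_star]; exact hbound ha p hp) (hbound hc ℓ hℓ) hmn _
      hcoeff).trans ?_⟩
  · rw [qFact_div_qFact_eq_qDescFactorial hq.1 hmn, pow_mul]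
  · rw [show -((m : ℝ) + n + ℓ) / 2 = -((m + n + ℓ : ℕ) : ℝ) / 2 by push_cast; ring, hscale]
    calc _ = Cq q ^ 5 * ((s * u) ^ (m + n) * (s * v) ^ ℓ / (1 - |q|)) := by ring
      _ ≤ Cq q ^ 6 * ((s * u) ^ (m + n) * (s * v) ^ ℓ / (1 - |q|)) :=
        mul_le_mul_of_nonneg_right (pow_le_pow_right₀ hC (by norm_num))
          (div_nonneg (by positivity) (sub_nonneg.2 habs.le))
      _ = _ := by ring

/-- Abstract form of Corollary 3.2 of the paper. -/
theorem stmt1 (A : Type*) [NormedRing A] [StarRing A] [CStarRing A]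
    [NormedAlgebra ℝ A] [CompleteSpace A]
    (q : ℝ) (hq : q ∈ Set.Ioo (-1 : ℝ) 1) (u v : ℝ) (hu : 0 < u) (hv : 0 < v)
    (a c : A)
    (h1 : star a * a = (u ^ 2) • (1 : A) + q • (a * star a))
    (h2 : star a * c = q • (c * star a))
    (ha : ∀ p : ℕ, 1 ≤ p → ‖a ^ p‖ ≤ Cq q * (1 - q) ^ (-(p : ℝ) / 2) * u ^ p)
    (hc : ∀ p : ℕ, 1 ≤ p → ‖c ^ p‖ ≤ Cq q * (1 - q) ^ (-(p : ℝ) / 2) * v ^ p) :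
    ∀ n m ℓ : ℕ, 1 ≤ n → m ≤ n → 1 ≤ ℓ →
      ∃ X : A,
        (star a) ^ m * a ^ n * c ^ ℓ
          = (qFact q n / qFact q (n - m) * u ^ (2 * m)) • (a ^ (n - m) * c ^ ℓ)
            + (q ^ ℓ) • X
        ∧ ‖X‖ ≤ Cq q ^ 6 / (1 - |q|) * (1 - q) ^ (-((m : ℝ) + n + ℓ) / 2)
            * u ^ (m + n) * v ^ ℓ :=
  stmt1_general A q hq u v hu hv a c h1 h2 ha hc
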